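/- Let H be an r-uniform multi-hypergraph (r ≥ 2) on a finite vertex set V, and consider a random orientation of its edges. For any two distinct vertices v₁, v₂ ∈ V, the indicator random variables I_{v₁}, I_{v₂} of the events that v₁, respectively v₂, have nonzero in-degree are negatively correlated: E[I_{v₁}·I_{v₂}] ≤ E[I_{v₁}]·E[I_{v₂}]. -/

import Mathlib

/-!
Let `Z_v` be the event that no edge is oriented towards `v`. In the product space of orientations
`Z_{v₁}`, `Z_{v₂}` and `Z_{v₁} ∩ Z_{v₂}` are boxes, so their sizes are products over the edges, and
the negative correlation `N · |Z_{v₁} ∩ Z_{v₂}| ≤ |Z_{v₁}| · |Z_{v₂}|` reduces edge by edge to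
`|A ∪ B| · |A ∩ B| ≤ |A| · |B|` for `A = e ∖ {v₁}`, `B = e ∖ {v₂}`, whose union is `e` as `v₁ ≠ v₂`.
Negative correlation passes to complements, and the complement of `Z_v` is the event that `v`
has nonzero in-degree.
-/

open Finset

/-- The indicator (as a real number) of the event that vertex `v` has nonzero
in-degree under the orientation `f` of the edges `E`. -/
noncomputable def indNonzeroIndeg {V : Type*} [DecidableEq V] {m : ℕ}
    {E : Fin m → Finset V} (v : V) (f : {f : Fin m → V // ∀ i, f i ∈ E i}) : ℝ :=
  if ∃ i, f.1 i = v then 1 else 0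

theorem Finset.card_union_mul_card_inter_le {α : Type*} [DecidableEq α] (A B : Finset α) :
    #(A ∪ B) * #(A ∩ B) ≤ #A * #B := by
  -- `#A * #B - #(A ∪ B) * #(A ∩ B) = (#(A ∪ B) - #A) * (#(A ∪ B) - #B)`
  have hsum := card_union_add_card_inter A B
  have hA := card_le_card (subset_union_left (s₁ := A) (s₂ := B))
  have hB := card_le_card (subset_union_right (s₁ := A) (s₂ := B))
  nlinarith

theorem Finset.card_mul_card_compl_inter_compl_le {Ω : Type*} [Fintype Ω] [DecidableEq Ω]
    {X Y : Finset Ω} (h : Fintype.card Ω * #(X ∩ Y) ≤ #X * #Y) :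
    Fintype.card Ω * #(Xᶜ ∩ Yᶜ) ≤ #Xᶜ * #Yᶜ := by
  have hX := card_compl_add_card X
  have hY := card_compl_add_card Y
  have hXY := card_compl_add_card (X ∪ Y)
  have hsum := card_union_add_card_inter X Y
  rw [← compl_union]
  nlinarith

theorem sum_uniform_ite_mul_le_of_card_inter {Ω : Type*} [Fintype Ω] [DecidableEq Ω]
    {X Y : Finset Ω} (h : Fintype.card Ω * #(X ∩ Y) ≤ #X * #Y) :
    ∑ ω, 1 / (Fintype.card Ω : ℝ) * ((if ω ∈ X then 1 else 0) * (if ω ∈ Y then 1 else 0)) ≤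
      (∑ ω, 1 / (Fintype.card Ω : ℝ) * (if ω ∈ X then 1 else 0)) *
        (∑ ω, 1 / (Fintype.card Ω : ℝ) * (if ω ∈ Y then 1 else 0)) := by
  set c : ℝ := 1 / Fintype.card Ω
  -- also when `Ω` is empty, since then `c = 0`
  have hc : c ^ 2 * Fintype.card Ω = c := by
    rcases eq_or_ne (Fintype.card Ω) 0 with h0 | h0
    · simp [c, h0]
    · simp only [c]; field_simp
  simp only [← mul_sum, ite_zero_mul_ite_zero, mul_one, ← mem_inter, sum_boole,
    filter_mem_eq_inter, univ_inter]
  calc c * #(X ∩ Y) = c ^ 2 * (Fintype.card Ω * #(X ∩ Y) : ℕ) := by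
        push_cast; rw [← mul_assoc, hc]
    _ ≤ c ^ 2 * (#X * #Y : ℕ) := by gcongr
    _ = c * #X * (c * #Y) := by push_cast; ring

section

variable {V : Type*} [Fintype V] [DecidableEq V] {m : ℕ}

abbrev HyperOrientation (E : Fin m → Finset V) := {f : Fin m → V // ∀ i, f i ∈ E i}

namespace HyperOrientation

variable (E : Fin m → Finset V)

theorem sum_prod_eq_prod_sum {R : Type*} [CommSemiring R] (w : Fin m → V → R) :
    ∑ f : HyperOrientation E, ∏ i, w i (f.1 i) = ∏ i, ∑ x ∈ E i, w i x := by
  rw [prod_univ_sum]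
  exact (sum_subtype (Fintype.piFinset E) (fun _ => Fintype.mem_piFinset)
    fun g => ∏ i, w i (g i)).symm

theorem card_filter_forall (p : Fin m → V → Prop) [∀ i, DecidablePred (p i)] :
    #{f : HyperOrientation E | ∀ i, p i (f.1 i)} = ∏ i, #{x ∈ E i | p i x} := by
  simp only [card_filter, ← sum_prod_eq_prod_sum, Fintype.prod_boole]
  congr!

theorem card_eq_prod : Fintype.card (HyperOrientation E) = ∏ i, #(E i) := by
  simpa using card_filter_forall E fun _ _ => True

def avoiding (v : V) : Finset (HyperOrientation E) := {f | ∀ i, f.1 i ≠ v}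

theorem card_mul_card_avoiding_inter_le {v₁ v₂ : V} (hv : v₁ ≠ v₂) :
    Fintype.card (HyperOrientation E) * #(avoiding E v₁ ∩ avoiding E v₂) ≤
      #(avoiding E v₁) * #(avoiding E v₂) := by
  have hinter : avoiding E v₁ ∩ avoiding E v₂ =
      ({f | ∀ i, f.1 i ≠ v₁ ∧ f.1 i ≠ v₂} : Finset (HyperOrientation E)) := by
    ext f; simp [avoiding, forall_and]
  rw [hinter, avoiding, avoiding, card_eq_prod, card_filter_forall E fun _ x => x ≠ v₁ ∧ x ≠ v₂,
    card_filter_forall E fun _ x => x ≠ v₁, card_filter_forall E fun _ x => x ≠ v₂,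
    ← prod_mul_distrib, ← prod_mul_distrib]
  refine prod_le_prod' fun i _ => ?_
  have hunion : {x ∈ E i | x ≠ v₁} ∪ {x ∈ E i | x ≠ v₂} = E i := by
    rw [← filter_or]; exact filter_true_of_mem fun x _ => by grind
  simpa only [hunion, filter_and] using
    card_union_mul_card_inter_le {x ∈ E i | x ≠ v₁} {x ∈ E i | x ≠ v₂}

end HyperOrientation

end

theorem neg_correlated_nonzero_indegree {V : Type*} [Fintype V] [DecidableEq V]
    (m r : ℕ)
    (E : Fin m → Finset V) (hE : ∀ i, (E i).card = r)
    (v₁ v₂ : V) (hv : v₁ ≠ v₂) :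
    (∑ f : {f : Fin m → V // ∀ i, f i ∈ E i},
        ((1 : ℝ) / r ^ m) * (indNonzeroIndeg v₁ f * indNonzeroIndeg v₂ f)) ≤
      (∑ f : {f : Fin m → V // ∀ i, f i ∈ E i},
          ((1 : ℝ) / r ^ m) * indNonzeroIndeg v₁ f) *
        (∑ f : {f : Fin m → V // ∀ i, f i ∈ E i},
            ((1 : ℝ) / r ^ m) * indNonzeroIndeg v₂ f) := by
  have hind : ∀ v (f : HyperOrientation E),
      indNonzeroIndeg v f = if f ∈ (HyperOrientation.avoiding E v)ᶜ then 1 else 0 := by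
    simp [indNonzeroIndeg, HyperOrientation.avoiding]
  have hcard : (r : ℝ) ^ m = Fintype.card (HyperOrientation E) := by
    simp [HyperOrientation.card_eq_prod, hE]
  simp only [hind, hcard]
  exact sum_uniform_ite_mul_le_of_card_inter <| card_mul_card_compl_inter_compl_le <|
    HyperOrientation.card_mul_card_avoiding_inter_le E hv
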